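/- arXiv:1908.05964 — 9 statements merged into one kernel-verified Lean document; each statement's English description precedes it below -/
import Mathlib

section
/- Let U be a type, r a natural number, F a proposition, and let z₁,…,z_k and z'₁,…,z'_l be r-tuples of elements of U (elements of Fin r → U). Then the second-order universally quantified clause (∀ A : (Fin r → U) → Prop, F ∨ (∃ i, A (z i)) ∨ (∃ j, ¬ A (z' j))) holds if and only if F ∨ (∃ i j, z i = z' j) holds. -/
theorem so_universal_clause_elimination
    (U : Type*) (r k l : ℕ) (F : Prop)
    (z : Fin k → Fin r → U) (z' : Fin l → Fin r → U) :
    (∀ A : (Fin r → U) → Prop, F ∨ (∃ i, A (z i)) ∨ (∃ j, ¬ A (z' j))) ↔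
      (F ∨ ∃ i j, z i = z' j) := by
  constructor
  · intro h
    rcases h (fun x => ∃ j, x = z' j) with hF | ⟨i, j, hij⟩ | ⟨j, hj⟩
    · exact Or.inl hF
    · exact Or.inr ⟨i, j, hij⟩
    · exact absurd ⟨j, rfl⟩ hj
  · rintro (hF | ⟨i, j, hij⟩) A
    · exact Or.inl hF
    · by_cases hA : A (z' j)
      · exact Or.inr (Or.inl ⟨i, hij ▸ hA⟩)
      · exact Or.inr (Or.inr ⟨j, hA⟩)
end

section
/- (∃ B : U → Prop, φ(B)) holds if and only if E ∧ (∀ y, F y ∨ G y) holds. (Ackermann's lemma, part 1: existential second-order quantification over B can be eliminated from a formula in simple normal form.) -/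
theorem ackermann_lemma_part1
    (U : Type*) (E : Prop) (F G : U → Prop) :
    (∃ B : U → Prop, E ∧ (∀ y, F y ∨ B y) ∧ (∀ y, G y ∨ ¬ B y)) ↔
      (E ∧ ∀ y, F y ∨ G y) := by
  constructor
  · rintro ⟨B, hE, h1, h2⟩
    refine ⟨hE, fun y => ?_⟩
    rcases h1 y with h | h
    · exact Or.inl h
    · rcases h2 y with h' | h'
      · exact Or.inr h'
      · exact absurd h h'
  · rintro ⟨hE, h⟩
    refine ⟨fun y => ¬ F y, hE, fun y => ?_, fun y => ?_⟩
    · exact or_not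
    · rcases h y with h' | h'
      · exact Or.inr (not_not_intro h')
      · exact Or.inl h'
end

section
/- Let ψ : U → Prop be any predicate. (i) If (∀ y, (E ∧ ¬ F y) → ψ y) and (∀ y, ψ y → (¬ E ∨ G y)), then φ(ψ) holds if and only if E ∧ (∀ y, F y ∨ G y) holds (i.e., φ(ψ) is equivalent to ∃ B, φ(B)). (ii) Conversely, if φ(ψ) holds, then (∀ y, (E ∧ ¬ F y) → ψ y) and (∀ y, ψ y → (¬ E ∨ G y)) both hold. (Ackermann's lemma, part 2: characterization of the predicates ψ whose substitution for B realizes the existential second-order quantifier.) -/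
theorem ackermann_lemma_part2
    (U : Type*) (E : Prop) (F G : U → Prop) (ψ : U → Prop) :
    (((∀ y, (E ∧ ¬ F y) → ψ y) ∧ (∀ y, ψ y → (¬ E ∨ G y))) →
      ((E ∧ (∀ y, F y ∨ ψ y) ∧ (∀ y, G y ∨ ¬ ψ y)) ↔
        (E ∧ ∀ y, F y ∨ G y)))
    ∧
    ((E ∧ (∀ y, F y ∨ ψ y) ∧ (∀ y, G y ∨ ¬ ψ y)) →
      ((∀ y, (E ∧ ¬ F y) → ψ y) ∧ (∀ y, ψ y → (¬ E ∨ G y)))) := by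
  constructor
  · rintro ⟨h1, h2⟩
    constructor
    · rintro ⟨hE, hF, hG⟩
      refine ⟨hE, fun y => ?_⟩
      rcases hF y with h | h
      · exact Or.inl h
      · rcases h2 y h with h' | h'
        · exact absurd hE h'
        · exact Or.inr h'
    · rintro ⟨hE, hFG⟩
      refine ⟨hE, fun y => ?_, fun y => ?_⟩
      · by_cases hf : F y
        · exact Or.inl hf
        · exact Or.inr (h1 y ⟨hE, hf⟩)
      · by_cases hp : ψ y
        · rcases h2 y hp with h | h
          · exact absurd hE h
          · exact Or.inl h
        · exact Or.inr hp
  · rintro ⟨hE, hF, hG⟩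
    constructor
    · rintro y ⟨_, hnf⟩
      rcases hF y with h | h
      · exact absurd h hnf
      · exact h
    · intro y hp
      rcases hG y with h | h
      · exact Or.inr h
      · exact absurd hp h
end

section
/- Define the Hilbert choice predicate ψ₀ : U → Prop by ψ₀ y := ¬ E ∨ G y. Then (i) φ(ψ₀) holds if and only if (∃ B : U → Prop, φ(B)) holds; and (ii) ψ₀ is the weakest such choice: for every predicate ψ : U → Prop such that φ(ψ) holds, one has ∀ y, ψ y → ψ₀ y. -/
/-- The Hilbert choice predicate `ψ₀ y := ¬ E ∨ G y`. -/
def psi0 {U : Type*} (E : Prop) (G : U → Prop) : U → Prop := fun y => ¬ E ∨ G y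

theorem hilbert_choice_simple_normal_form
    (U : Type*) (E : Prop) (F G : U → Prop) :
    ((E ∧ (∀ y, F y ∨ psi0 E G y) ∧ (∀ y, G y ∨ ¬ psi0 E G y)) ↔
        (∃ B : U → Prop, E ∧ (∀ y, F y ∨ B y) ∧ (∀ y, G y ∨ ¬ B y)))
    ∧
    (∀ ψ : U → Prop,
      (E ∧ (∀ y, F y ∨ ψ y) ∧ (∀ y, G y ∨ ¬ ψ y)) →
        ∀ y, ψ y → psi0 E G y) := by
  constructor
  · constructor
    · exact fun h => ⟨psi0 E G, h⟩
    · rintro ⟨B, hE, h1, h2⟩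
      refine ⟨hE, fun y => ?_, fun y => ?_⟩ <;> unfold psi0 <;>
        rcases h1 y with h | h <;> rcases h2 y with h' | h' <;> tauto
  · rintro ψ ⟨hE, h1, h2⟩ y hy
    rcases h2 y with h | h
    · exact Or.inr h
    · exact absurd hy h
end

section
/- For all natural numbers k and l and all y, y' ∈ U: H^{k+l} y y' holds if and only if (∀ z, H^k y z ∨ H^l z y') holds. -/
/-- Iterates of the binary predicate `H`:
`H^0 y y' := y ≠ y'` and `H^(k+1) y y' := ∀ y₁, H^k y y₁ ∨ H y₁ y'`. -/
def Hiter {U : Type*} (H : U → U → Prop) : ℕ → U → U → Prop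
  | 0 => fun y y' => y ≠ y'
  | k + 1 => fun y y' => ∀ y₁, Hiter H k y y₁ ∨ H y₁ y'

theorem Hiter_add {U : Type*} (H : U → U → Prop) (k l : ℕ) (y y' : U) :
    Hiter H (k + l) y y' ↔ ∀ z, Hiter H k y z ∨ Hiter H l z y' := by
  induction l generalizing y' with
  | zero =>
    simp only [Nat.add_zero, Hiter]
    constructor
    · intro h z
      by_cases hz : z = y'
      · exact Or.inl (hz ▸ h)
      · exact Or.inr hz
    · intro h
      rcases h y' with h | h
      · exact h
      · exact absurd rfl h
  | succ l ih =>
    show (∀ y₁, Hiter H (k + l) y y₁ ∨ H y₁ y') ↔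
        ∀ z, Hiter H k y z ∨ ∀ y₁, Hiter H l z y₁ ∨ H y₁ y'
    constructor
    · intro h z
      by_cases hk : Hiter H k y z
      · exact Or.inl hk
      · refine Or.inr fun y₁ => ?_
        rcases h y₁ with h' | h'
        · rcases (ih y₁).1 h' z with h'' | h''
          · exact absurd h'' hk
          · exact Or.inl h''
        · exact Or.inr h'
    · intro h y₁
      by_cases hy : H y₁ y'
      · exact Or.inr hy
      · refine Or.inl ((ih y₁).2 fun z => ?_)
        rcases h z with h' | h'
        · exact Or.inl h'
        · rcases h' y₁ with h'' | h''
          · exact Or.inr h''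
          · exact absurd h'' hy
end

section
/- Let ψ : U → Prop be any predicate such that φ(ψ) holds. Then for every natural number k, ∀ y, ψ y → γ_k y. (Lemma 10, statement (2): every predicate realizing the existential second-order quantifier is pointwise below each candidate γ_k, so the γ_k over-approximate every Hilbert choice.) -/
/-- The normal form `φ(B) = E ∧ (∀ y, F y ∨ B y) ∧ (∀ y', G y' ∨ ¬ B y') ∧
(∀ y y', H y y' ∨ B y ∨ ¬ B y')`. -/
def phi {U : Type*} (E : Prop) (F G : U → Prop) (H : U → U → Prop) (B : U → Prop) : Prop :=
  E ∧ (∀ y, F y ∨ B y) ∧ (∀ y', G y' ∨ ¬ B y') ∧ (∀ y y', H y y' ∨ B y ∨ ¬ B y')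

/-- The candidate Hilbert choice operators
`γ_k y := ¬ E ∨ ⋀_{i=0}^k (∀ z, G z ∨ H^i z y)`. -/
def gamma {U : Type*} (E : Prop) (G : U → Prop) (H : U → U → Prop) (k : ℕ) (y : U) : Prop :=
  ¬ E ∨ ∀ i ≤ k, ∀ z, G z ∨ Hiter H i z y

lemma key {U : Type*} {E : Prop} {F G : U → Prop} {H : U → U → Prop}
    {ψ : U → Prop} (hψ : phi E F G H ψ) :
    ∀ i : ℕ, ∀ y, ψ y → ∀ z, G z ∨ Hiter H i z y := by
  obtain ⟨_, _, h3, h4⟩ := hψ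
  intro i
  induction i with
  | zero =>
    intro y hy z
    rcases h3 z with hg | hz
    · exact Or.inl hg
    · exact Or.inr (fun h => hz (h ▸ hy))
  | succ i ih =>
    intro y hy z
    rw [or_iff_not_imp_left]
    intro hng y₁
    rcases h4 y₁ y with h | h | h
    · exact Or.inr h
    · exact Or.inl ((ih y₁ h z).resolve_left hng)
    · exact absurd hy h

theorem gamma_weakest {U : Type*} (E : Prop) (F G : U → Prop) (H : U → U → Prop)
    (ψ : U → Prop) (hψ : phi E F G H ψ) :
    ∀ k : ℕ, ∀ y, ψ y → gamma E G H k y := by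
  intro k y hy
  exact Or.inr (fun i _ z => key hψ i y hy z)
end

section
/- For every natural number k, if the sequence of candidates stabilizes at k, i.e., ∀ y, γ_k y → γ_{k+1} y, then φ(γ_k) holds if and only if (∃ B : U → Prop, φ(B)) holds. (Lemma 10, statement (3), second part: upon stabilization, γ_k is a Hilbert choice operator for the existential second-order quantifier.) -/
theorem gamma_stabilizes {U : Type*} (E : Prop) (F G : U → Prop) (H : U → U → Prop) (k : ℕ)
    (hstab : ∀ y, gamma E G H k y → gamma E G H (k + 1) y) :
    phi E F G H (gamma E G H k) ↔ ∃ B : U → Prop, phi E F G H B := by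
  constructor
  · intro h; exact ⟨_, h⟩
  · rintro ⟨B, hE, hF, hG, hH⟩
    have key : ∀ i (y' : U), B y' → ∀ z, G z ∨ Hiter H i z y' := by
      intro i
      induction i with
      | zero =>
        intro y' hB z
        by_cases hzy : z = y'
        · subst hzy; exact Or.inl ((hG z).resolve_right (fun h => h hB))
        · exact Or.inr hzy
      | succ i ih =>
        intro y' hB z
        by_cases hg : G z
        · exact Or.inl hg
        · refine Or.inr fun y₁ => ?_
          rcases hH y₁ y' with h | h | h
          · exact Or.inr h
          · exact Or.inl ((ih y₁ h z).resolve_left hg)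
          · exact absurd hB h
    refine ⟨hE, ?_, ?_, ?_⟩
    · intro y
      rcases hF y with h | h
      · exact Or.inl h
      · exact Or.inr (Or.inr fun i _ z => key i y h z)
    · intro y'
      by_cases hg : G y'
      · exact Or.inl hg
      · refine Or.inr fun hgam => ?_
        rcases hgam with h | h
        · exact h hE
        · rcases h 0 (Nat.zero_le k) y' with h' | h'
          · exact hg h'
          · exact h' rfl
    · intro y y'
      by_cases hHyy' : H y y'
      · exact Or.inl hHyy'
      · by_cases hgy' : gamma E G H k y'
        · refine Or.inr (Or.inl ?_)
          rcases hstab y' hgy' with h | h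
          · exact Or.inl h
          · refine Or.inr fun i hi z => ?_
            rcases h (i + 1) (Nat.succ_le_succ hi) z with hg | hh
            · exact Or.inl hg
            · exact Or.inr ((hh y).resolve_right hHyy')
        · exact Or.inr (Or.inr hgy')
end

section
/- Define the second-order Hilbert choice predicate ℋ : U → Prop by ℋ y := ∃ B : U → Prop, B y ∧ (∀ y', G y' ∨ ¬ B y') ∧ (∀ z z', H z z' ∨ B z ∨ ¬ B z'). If (∃ B : U → Prop, φ(B)) holds, then φ(ℋ) holds; that is, substituting ℋ for B realizes the existential second-order quantifier whenever it is realizable. -/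
/-- The second-order Hilbert choice predicate
`ℋ y := ∃ B, B y ∧ (∀ y', G y' ∨ ¬ B y') ∧ (∀ z z', H z z' ∨ B z ∨ ¬ B z')`. -/
def hilbertSO {U : Type*} (G : U → Prop) (H : U → U → Prop) (y : U) : Prop :=
  ∃ B : U → Prop, B y ∧ (∀ y', G y' ∨ ¬ B y') ∧ (∀ z z', H z z' ∨ B z ∨ ¬ B z')

theorem so_hilbert_choice {U : Type*} (E : Prop) (F G : U → Prop) (H : U → U → Prop) :
    (∃ B : U → Prop, phi E F G H B) → phi E F G H (hilbertSO G H) := by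
  rintro ⟨B, hE, hF, hG, hH⟩
  refine ⟨hE, ?_, ?_, ?_⟩
  · intro y
    rcases hF y with h | h
    · exact Or.inl h
    · exact Or.inr ⟨B, h, hG, hH⟩
  · intro y'
    by_cases hg : G y'
    · exact Or.inl hg
    · refine Or.inr ?_
      rintro ⟨B', hB', hG', _⟩
      rcases hG' y' with h | h
      · exact hg h
      · exact h hB'
  · intro y y'
    by_cases hh : H y y'
    · exact Or.inl hh
    · refine Or.inr ?_
      by_cases hy' : hilbertSO G H y'
      · rcases hy' with ⟨B', hB', hG', hH'⟩
        rcases hH' y y' with h | h | h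
        · exact absurd h hh
        · exact Or.inl ⟨B', h, hG', hH'⟩
        · exact absurd hB' h
      · exact Or.inr hy'
end

section
/- Let L be a first-order language and (ψ_h)_{h ∈ ℕ} a sequence of L-sentences that is semantically decreasing, i.e., every nonempty L-structure satisfying ψ_{h+1} also satisfies ψ_h. Suppose the infinite conjunction of the ψ_h is first-order definable: there is an L-sentence φ such that a nonempty L-structure satisfies φ if and only if it satisfies ψ_h for every h. Then there exists m such that for all k ≥ 0, ψ_m and ψ_{m+k} are satisfied by exactly the same nonempty L-structures; in particular, ψ_m is semantically equivalent to φ. -/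
open FirstOrder FirstOrder.Language

universe u v

theorem decreasing_fo_definable_conjunction_stabilizes
    {L : FirstOrder.Language.{u, v}} (ψ : ℕ → L.Sentence)
    (hdec : ∀ h : ℕ, ∀ (M : Type (max u v)) [L.Structure M] [Nonempty M],
      M ⊨ ψ (h + 1) → M ⊨ ψ h)
    (φ : L.Sentence)
    (hφ : ∀ (M : Type (max u v)) [L.Structure M] [Nonempty M],
      M ⊨ φ ↔ ∀ h : ℕ, M ⊨ ψ h) :
    ∃ m : ℕ, ∀ k : ℕ, ∀ (M : Type (max u v)) [L.Structure M] [Nonempty M],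
      (M ⊨ ψ m ↔ M ⊨ ψ (m + k)) ∧ (M ⊨ ψ m ↔ M ⊨ φ) := by
  classical
  -- downward implication lemma
  have down : ∀ (M : Type (max u v)) [L.Structure M] [Nonempty M],
      ∀ h d : ℕ, M ⊨ ψ (h + d) → M ⊨ ψ h := by
    intro M _ _ h d
    induction d with
    | zero => exact id
    | succ n ih => intro hs; exact ih (hdec (h + n) M hs)
  -- the theory {¬φ} ∪ range ψ is unsatisfiable
  have hunsat : ¬ (insert φ.not (Set.range ψ) : L.Theory).IsSatisfiable := by
    rintro ⟨M⟩
    have hnφ : (M : Type (max u v)) ⊨ φ.not :=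
      M.is_model.realize_of_mem _ (Set.mem_insert _ _)
    have hall : ∀ h, (M : Type (max u v)) ⊨ ψ h := fun h =>
      M.is_model.realize_of_mem _ (Set.mem_insert_of_mem _ ⟨h, rfl⟩)
    have : (M : Type (max u v)) ⊨ φ := (hφ M).2 hall
    exact (Sentence.realize_not _).1 hnφ this
  -- compactness: some finite subset is unsatisfiable
  have hfin : ¬ (insert φ.not (Set.range ψ) : L.Theory).IsFinitelySatisfiable := by
    intro h
    exact hunsat (Theory.isSatisfiable_iff_isFinitelySatisfiable.2 h)
  rw [Theory.IsFinitelySatisfiable] at hfin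
  push_neg at hfin
  obtain ⟨T0, hT0sub, hT0unsat⟩ := hfin
  -- choose bound m
  set f : L.Sentence → ℕ := fun s => if h : ∃ n, ψ n = s then h.choose else 0 with hf
  set m : ℕ := T0.sup f with hm
  -- key: any nonempty model of ψ m models φ
  have key : ∀ (M : Type (max u v)) [L.Structure M] [Nonempty M],
      M ⊨ ψ m → M ⊨ φ := by
    intro M _ _ hsm
    by_contra hnφ
    have hmodel : M ⊨ (T0 : L.Theory) := by
      rw [Theory.model_iff]
      intro s hs
      rcases hT0sub hs with h | ⟨n, rfl⟩
      · subst h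
        exact (Sentence.realize_not _).2 hnφ
      · have hex : ∃ k, ψ k = ψ n := ⟨n, rfl⟩
        have hle : f (ψ n) ≤ m := Finset.le_sup hs
        rw [hf] at hle
        simp only [dif_pos hex] at hle
        have := down M hex.choose (m - hex.choose) (by
          rwa [Nat.add_sub_cancel' hle])
        rwa [hex.choose_spec] at this
    exact hT0unsat ⟨Theory.ModelType.of _ M⟩
  refine ⟨m, fun k M _ _ => ?_⟩
  constructor
  · constructor
    · intro hsm
      exact (hφ M).1 (key M hsm) (m + k)
    · intro hk
      exact down M m k hk
  · exact ⟨key M, fun hf => (hφ M).1 hf m⟩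
end
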